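/- arXiv:math/0111246 — 2 statements merged into one kernel-verified Lean document; each statement's English description precedes it below -/
import Mathlib

section
/- Applying the elementary symmetric differential operator e_k(∂X) to Δ_L(X;Y) yields Σ_{1≤i_1<...<i_k≤n} Δ_{e_k(i_1,...,i_k;L)}(X;Y), where e_k(i_1,...,i_k;L) is the diagram obtained from L by replacing each cell (p_{i_r}, q_{i_r}) with (p_{i_r} − 1, q_{i_r}); terms whose diagram has a negative coordinate or repeated cell are 0. -/
open MvPolynomial

noncomputable def Delta (n : ℕ) (L : Fin n → ℕ × ℕ) : MvPolynomial (Fin n ⊕ Fin n) ℚ :=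
  Matrix.det (Matrix.of fun i j : Fin n =>
    C ((((L j).1.factorial : ℚ) * ((L j).2.factorial : ℚ))⁻¹) *
      X (Sum.inl i) ^ (L j).1 * X (Sum.inr i) ^ (L j).2)

noncomputable def DeltaZ (n : ℕ) (L : Fin n → ℤ × ℤ) : MvPolynomial (Fin n ⊕ Fin n) ℚ :=
  if ∀ i, 0 ≤ (L i).1 ∧ 0 ≤ (L i).2 then
    Delta n fun i => ((L i).1.toNat, (L i).2.toNat)
  else 0

noncomputable def diffOp {σ : Type} (f P : MvPolynomial σ ℚ) : MvPolynomial σ ℚ :=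
  ∑ d ∈ f.support, ∑ e ∈ P.support,
    monomial (e - d) (f.coeff d * P.coeff e *
      ∏ i ∈ d.support, (Nat.descFactorial (e i) (d i) : ℚ))

def eps (n : ℕ) (L : Fin n → ℤ × ℤ) : ℚ :=
  if Function.Injective L ∧ ∀ i, 0 ≤ (L i).1 ∧ 0 ≤ (L i).2 then 1 else 0

def tailCount (n : ℕ) {ℓ : ℕ} (α : Fin ℓ → ℕ) (T : ∀ j, Fin (α j) → Fin n) (k : ℕ)
    (i : Fin n) : ℕ :=
  ∑ j : Fin ℓ, if k ≤ (j : ℕ) then (Finset.univ.filter fun r => T j r = i).card else 0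

def applyTail (n : ℕ) {ℓ : ℕ} (α : Fin ℓ → ℕ) (T : ∀ j, Fin (α j) → Fin n) (k : ℕ)
    (L : Fin n → ℤ × ℤ) : Fin n → ℤ × ℤ :=
  fun i => ((L i).1 - tailCount n α T k i, (L i).2)

def epsTuple (n : ℕ) {ℓ : ℕ} (α : Fin ℓ → ℕ) (T : ∀ j, Fin (α j) → Fin n)
    (L : Fin n → ℤ × ℤ) : ℚ :=
  ∏ k : Fin ℓ, eps n (applyTail n α T k L)

noncomputable def eInt (n : ℕ) (k : ℤ) : MvPolynomial (Fin n) ℚ :=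
  if 0 ≤ k then esymm (Fin n) ℚ k.toNat else 0

noncomputable def schurDual (n ℓ : ℕ) (lam' : Fin ℓ → ℕ) : MvPolynomial (Fin n) ℚ :=
  Matrix.det (Matrix.of fun i j : Fin ℓ => eInt n ((lam' j : ℤ) + (i : ℕ) - (j : ℕ)))

def IsCSYT (n : ℕ) {ℓ : ℕ} (α : Fin ℓ → ℕ) (T : ∀ j, Fin (α j) → Fin n) : Prop :=
  (∀ j, StrictMono (T j)) ∧
  ∀ j j' : Fin ℓ, (j' : ℕ) = (j : ℕ) + 1 →
    ∀ (i : Fin (α j)) (i' : Fin (α j')), (i : ℕ) = (i' : ℕ) → T j i ≤ T j' i'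

/-!
Expand `Δ_L` over permutations: the `σ`-term is, up to sign, the monomial
`∏ᵢ xᵢ^{p_{σ i}} yᵢ^{q_{σ i}} / (p_{σ i}! q_{σ i}!)`. The operator `∏_{i ∈ s} ∂xᵢ` sends it to the
`σ`-term of the diagram lowered at the cells `σ(s)`, or to `0` if one of them has `p = 0`, because
`∂x (x^p / p!) = x^(p-1) / (p-1)!`. Since `e_k(∂X) = ∑_{|s| = k} ∏_{i ∈ s} ∂xᵢ`, substituting
`t = σ(s)` in the sum over `s` and then summing over `σ` gives `∑_{|t| = k} Δ_{e_k(t; L)}`.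
-/

open Finset Nat Equiv

section DiffOp

variable {σ : Type}

theorem diffOp_eq_sum_of_support_subset {f P : MvPolynomial σ ℚ} {U V : Finset (σ →₀ ℕ)}
    (hU : f.support ⊆ U) (hV : P.support ⊆ V) :
    diffOp f P = ∑ d ∈ U, ∑ e ∈ V, monomial (e - d)
      (f.coeff d * P.coeff e * ∏ i ∈ d.support, ((e i).descFactorial (d i) : ℚ)) := by
  rw [diffOp, sum_subset hU fun d _ hd => by simp [notMem_support_iff.mp hd]]
  refine sum_congr rfl fun d _ => sum_subset hV fun e _ he => ?_
  simp [notMem_support_iff.mp he]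

theorem diffOp_add_left (f g P : MvPolynomial σ ℚ) :
    diffOp (f + g) P = diffOp f P + diffOp g P := by
  classical
  rw [diffOp_eq_sum_of_support_subset support_add subset_rfl,
    diffOp_eq_sum_of_support_subset (subset_union_left (s₂ := g.support)) subset_rfl,
    diffOp_eq_sum_of_support_subset (subset_union_right (s₁ := f.support)) subset_rfl,
    ← sum_add_distrib]
  simp only [coeff_add, add_mul, map_add, sum_add_distrib]

theorem diffOp_add_right (f P Q : MvPolynomial σ ℚ) :
    diffOp f (P + Q) = diffOp f P + diffOp f Q := by
  classical
  rw [diffOp_eq_sum_of_support_subset subset_rfl support_add,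
    diffOp_eq_sum_of_support_subset subset_rfl (subset_union_left (s₂ := Q.support)),
    diffOp_eq_sum_of_support_subset subset_rfl (subset_union_right (s₁ := P.support)),
    ← sum_add_distrib]
  simp only [coeff_add, mul_add, add_mul, map_add, sum_add_distrib]

theorem diffOp_sum_left {α : Type*} (s : Finset α) (f : α → MvPolynomial σ ℚ)
    (P : MvPolynomial σ ℚ) : diffOp (∑ a ∈ s, f a) P = ∑ a ∈ s, diffOp (f a) P :=
  map_sum (AddMonoidHom.mk' (diffOp · P) fun f g => diffOp_add_left f g P) f s

theorem diffOp_sum_right {α : Type*} (f : MvPolynomial σ ℚ) (s : Finset α)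
    (P : α → MvPolynomial σ ℚ) : diffOp f (∑ a ∈ s, P a) = ∑ a ∈ s, diffOp f (P a) :=
  map_sum (AddMonoidHom.mk' (diffOp f) (diffOp_add_right f)) P s

theorem diffOp_monomial_monomial (d e : σ →₀ ℕ) (c : ℚ) :
    diffOp (monomial d 1) (monomial e c) =
      monomial (e - d) (c * ∏ i ∈ d.support, ((e i).descFactorial (d i) : ℚ)) := by
  classical
  by_cases hc : c = 0
  · simp [hc, diffOp, support_monomial]
  · simp [diffOp, support_monomial, hc, coeff_monomial]

end DiffOp

section Diagram

def lowerOn {ι R : Type*} [DecidableEq ι] [Sub R] [One R] (s : Finset ι) (P : ι → R × R) :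
    ι → R × R :=
  fun i => if i ∈ s then ((P i).1 - 1, (P i).2) else P i

theorem lowerOn_comp_equiv {ι κ R : Type*} [DecidableEq ι] [DecidableEq κ] [Sub R] [One R]
    (s : Finset ι) (P : κ → R × R) (e : ι ≃ κ) :
    lowerOn s (P ∘ e) = lowerOn (s.map e.toEmbedding) P ∘ e := by
  ext i <;> by_cases hi : i ∈ s <;> simp [lowerOn, hi]

noncomputable def cellCoeff (p : ℕ × ℕ) : ℚ := ((p.1 ! : ℚ) * (p.2 ! : ℚ))⁻¹

theorem cellCoeff_mul_fst {p q : ℕ} (hp : 1 ≤ p) : cellCoeff (p, q) * p = cellCoeff (p - 1, q) := by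
  rw [cellCoeff, cellCoeff, ← Nat.mul_factorial_pred (show p ≠ 0 by omega)]
  have : (p : ℚ) ≠ 0 := by positivity
  push_cast
  field_simp

variable {ι : Type}

noncomputable def xExponent (s : Finset ι) : ι ⊕ ι →₀ ℕ :=
  ∑ i ∈ s, Finsupp.single (Sum.inl i) 1

@[simp] theorem xExponent_inl [DecidableEq ι] (s : Finset ι) (i : ι) :
    xExponent s (Sum.inl i) = if i ∈ s then 1 else 0 := by
  simp [xExponent, Finsupp.finsetSum_apply, Finsupp.single_apply]

@[simp] theorem xExponent_inr (s : Finset ι) (i : ι) : xExponent s (Sum.inr i) = 0 := by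
  simp [xExponent, Finsupp.finsetSum_apply]

variable [Fintype ι]

noncomputable def xyExponent (Q : ι → ℕ × ℕ) : ι ⊕ ι →₀ ℕ :=
  ∑ i, (Finsupp.single (Sum.inl i) (Q i).1 + Finsupp.single (Sum.inr i) (Q i).2)

/-- `c · ∏ᵢ xᵢ ^ pᵢ yᵢ ^ qᵢ / (pᵢ! qᵢ!)` for `Q i = (pᵢ, qᵢ)`, where `xᵢ = X (Sum.inl i)` and
`yᵢ = X (Sum.inr i)`. -/
noncomputable def diagMonomial (Q : ι → ℕ × ℕ) (c : ℚ) : MvPolynomial (ι ⊕ ι) ℚ :=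
  monomial (xyExponent Q) (c * ∏ i, cellCoeff (Q i))

@[simp] theorem xyExponent_inl (Q : ι → ℕ × ℕ) (i : ι) : xyExponent Q (Sum.inl i) = (Q i).1 := by
  classical
  simp [xyExponent, Finsupp.finsetSum_apply, Finsupp.single_apply]

@[simp] theorem xyExponent_inr (Q : ι → ℕ × ℕ) (i : ι) : xyExponent Q (Sum.inr i) = (Q i).2 := by
  classical
  simp [xyExponent, Finsupp.finsetSum_apply, Finsupp.single_apply]

theorem rename_inl_esymm (k : ℕ) :
    rename Sum.inl (esymm ι ℚ k) =
      ∑ s ∈ powersetCard k univ, (monomial (xExponent s) 1 : MvPolynomial (ι ⊕ ι) ℚ) := by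
  simp_rw [esymm, map_sum, map_prod, rename_X, xExponent, monomial_sum_one, X]

variable [DecidableEq ι]

theorem xyExponent_sub_xExponent (Q : ι → ℕ × ℕ) (s : Finset ι) :
    xyExponent Q - xExponent s = xyExponent (lowerOn s Q) := by
  ext (i | i) <;> by_cases hi : i ∈ s <;> simp [lowerOn, hi]

theorem prod_descFactorial_xExponent (s : Finset ι) (e : ι ⊕ ι →₀ ℕ) :
    ∏ v ∈ (xExponent s).support, ((e v).descFactorial (xExponent s v) : ℚ) =
      ∏ i ∈ s, (e (Sum.inl i) : ℚ) := by
  rw [prod_subset (subset_univ _) fun v _ hv => by simp [Finsupp.notMem_support_iff.mp hv],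
    Fintype.prod_sum_type]
  simp [apply_ite, prod_ite_mem]

theorem prod_cellCoeff_lowerOn {Q : ι → ℕ × ℕ} {s : Finset ι} (h : ∀ i ∈ s, 1 ≤ (Q i).1) :
    ∏ i, cellCoeff (lowerOn s Q i) = (∏ i, cellCoeff (Q i)) * ∏ i ∈ s, ((Q i).1 : ℚ) := by
  calc ∏ i, cellCoeff (lowerOn s Q i)
      = ∏ i, cellCoeff (Q i) * (if i ∈ s then ((Q i).1 : ℚ) else 1) := by
        refine prod_congr rfl fun i _ => ?_
        by_cases hi : i ∈ s
        · simp [lowerOn, hi, ← cellCoeff_mul_fst (h i hi)]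
        · simp [lowerOn, hi]
    _ = (∏ i, cellCoeff (Q i)) * ∏ i ∈ s, ((Q i).1 : ℚ) := by
        rw [prod_mul_distrib, prod_ite_mem, univ_inter]

theorem diffOp_xExponent_diagMonomial (s : Finset ι) (Q : ι → ℕ × ℕ) (c : ℚ) :
    diffOp (monomial (xExponent s) 1) (diagMonomial Q c) =
      if ∀ i ∈ s, 1 ≤ (Q i).1 then diagMonomial (lowerOn s Q) c else 0 := by
  rw [diagMonomial, diffOp_monomial_monomial, prod_descFactorial_xExponent,
    xyExponent_sub_xExponent]
  split_ifs with h
  · rw [diagMonomial, prod_cellCoeff_lowerOn h, mul_assoc]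
    simp only [xyExponent_inl]
  · push Not at h
    obtain ⟨i, hi, hQi⟩ := h
    rw [prod_eq_zero hi (by simp [Nat.lt_one_iff.mp hQi]), mul_zero, map_zero]

end Diagram

theorem Delta_eq_sum_perm (n : ℕ) (P : Fin n → ℕ × ℕ) :
    Delta n P = ∑ σ : Perm (Fin n), diagMonomial (P ∘ σ) (Perm.sign σ : ℚ) := by
  rw [Delta, ← Matrix.det_transpose, Matrix.det_apply']
  refine sum_congr rfl fun σ _ => ?_
  have hentry : ∀ i, C (((P (σ i)).1 ! * (P (σ i)).2 ! : ℚ)⁻¹) * X (Sum.inl i) ^ (P (σ i)).1 *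
      X (Sum.inr i) ^ (P (σ i)).2 = monomial (Finsupp.single (Sum.inl i) (P (σ i)).1 +
        Finsupp.single (Sum.inr i) (P (σ i)).2) (cellCoeff (P (σ i))) := fun i => by
    rw [X_pow_eq_monomial, X_pow_eq_monomial, mul_assoc, monomial_mul, C_mul_monomial, mul_one,
      mul_one, cellCoeff]
  simp only [Matrix.transpose_apply, Matrix.of_apply, hentry]
  rw [← monomial_sum_prod, diagMonomial, ← C_mul_monomial]
  simp [xyExponent]

theorem diffOp_esymm_Delta (n k : ℕ) (P : Fin n → ℕ × ℕ) :
    diffOp (rename Sum.inl (esymm (Fin n) ℚ k)) (Delta n P) =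
      ∑ t ∈ powersetCard k univ, if ∀ i ∈ t, 1 ≤ (P i).1 then Delta n (lowerOn t P) else 0 := by
  -- `∂xᵢ` only sees row `i`, so on the `σ`-term it lowers the cell in column `σ i`
  have hterm : ∀ (s : Finset (Fin n)) (σ : Perm (Fin n)),
      diffOp (monomial (xExponent s) 1) (diagMonomial (P ∘ σ) (Perm.sign σ : ℚ)) =
        if ∀ i ∈ σ.finsetCongr s, 1 ≤ (P i).1 then
          diagMonomial (lowerOn (σ.finsetCongr s) P ∘ σ) (Perm.sign σ : ℚ) else 0 := by
    intro s σ
    rw [diffOp_xExponent_diagMonomial, lowerOn_comp_equiv, finsetCongr_apply]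
    simp only [forall_mem_map, toEmbedding_apply, Function.comp_apply]
    congr 1
  calc _ = ∑ σ : Perm (Fin n), ∑ s ∈ powersetCard k univ,
          diffOp (monomial (xExponent s) 1) (diagMonomial (P ∘ σ) (Perm.sign σ : ℚ)) := by
        rw [rename_inl_esymm, diffOp_sum_left, sum_comm]
        simp_rw [Delta_eq_sum_perm n P, diffOp_sum_right]
    _ = ∑ σ : Perm (Fin n), ∑ t ∈ powersetCard k univ, if ∀ i ∈ t, 1 ≤ (P i).1 then
          diagMonomial (lowerOn t P ∘ σ) (Perm.sign σ : ℚ) else 0 := by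
        refine sum_congr rfl fun σ _ => ?_
        simp_rw [hterm]
        exact sum_equiv σ.finsetCongr (by simp [finsetCongr_apply]) fun _ _ => rfl
    _ = _ := by
        rw [sum_comm]
        simp_rw [Delta_eq_sum_perm, ite_sum_zero]

theorem DeltaZ_lowerOn {n : ℕ} {L : Fin n → ℤ × ℤ} (hL : ∀ i, 0 ≤ (L i).1 ∧ 0 ≤ (L i).2)
    (t : Finset (Fin n)) :
    DeltaZ n (lowerOn t L) = if ∀ i ∈ t, 1 ≤ (L i).1.toNat then
      Delta n (lowerOn t fun i => ((L i).1.toNat, (L i).2.toNat)) else 0 := by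
  split_ifs with h
  · have hnonneg : ∀ i, 0 ≤ (lowerOn t L i).1 ∧ 0 ≤ (lowerOn t L i).2 := fun i => by
      unfold lowerOn
      split_ifs with hi <;> grind
    rw [DeltaZ, if_pos hnonneg]
    congr 1
    ext i <;> unfold lowerOn <;> split_ifs with hi <;> grind
  · push Not at h
    obtain ⟨i, hi, hLi⟩ := h
    refine if_neg fun hnonneg => ?_
    have := (hnonneg i).1
    simp only [lowerOn, hi, if_true] at this
    omega

theorem stmt4_general (n k : ℕ) (L : Fin n → ℤ × ℤ) (hpos : ∀ i, 0 ≤ (L i).1 ∧ 0 ≤ (L i).2) :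
    diffOp (rename Sum.inl (esymm (Fin n) ℚ k)) (DeltaZ n L) =
      ∑ s ∈ Finset.powersetCard k (Finset.univ : Finset (Fin n)),
        DeltaZ n fun i => if i ∈ s then ((L i).1 - 1, (L i).2) else L i := by
  rw [DeltaZ, if_pos hpos, diffOp_esymm_Delta]
  exact sum_congr rfl fun t _ => (DeltaZ_lowerOn hpos t).symm

theorem stmt4 (n k : ℕ) (hk : 1 ≤ k) (L : Fin n → ℤ × ℤ)
    (hinj : Function.Injective L) (hpos : ∀ i, 0 ≤ (L i).1 ∧ 0 ≤ (L i).2) :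
    diffOp (rename Sum.inl (esymm (Fin n) ℚ k)) (DeltaZ n L) =
      ∑ s ∈ Finset.powersetCard k (Finset.univ : Finset (Fin n)),
        DeltaZ n fun i => if i ∈ s then ((L i).1 - 1, (L i).2) else L i :=
  stmt4_general n k L hpos
end

section
/- A tableau T = (T_1,...,T_ℓ) ∈ CT_α with strictly increasing columns is a column-strict Young tableau (i.e. α is a partition and rows of T are weakly increasing) if and only if for every pair of adjacent columns T_j, T_{j+1}, the parenthesis word of the merged sorted multiset — with entries from T_j marked as left parentheses and entries from T_{j+1} marked as right parentheses, equal values reading the left-column occurrence first — has no unpaired right parenthesis under the usual parenthesis-matching rule. -/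
def sortKey (p q : ℕ × ℕ) : Prop := p.1 < q.1 ∨ (p.1 = q.1 ∧ p.2 ≤ q.2)

instance : DecidableRel sortKey := fun p q => by unfold sortKey; infer_instance

/-- The merged, sorted list of entries of two columns, each entry tagged with
`0` (left column) or `1` (right column); ties are broken left column first. -/
def pairList {n a b : ℕ} (c1 : Fin a → Fin n) (c2 : Fin b → Fin n) : List (ℕ × ℕ) :=
  List.insertionSort sortKey
    ((List.ofFn fun r => ((c1 r : ℕ), 0)) ++ List.ofFn fun s => ((c2 s : ℕ), 1))

/-- The parenthesis word of two columns: `true` = '(' (left column),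
`false` = ')' (right column). -/
def pairWord {n a b : ℕ} (c1 : Fin a → Fin n) (c2 : Fin b → Fin n) : List Bool :=
  (pairList c1 c2).map fun p => p.2 == 0

/-- The multiset of entries of the two columns. -/
def pairVals {n a b : ℕ} (c1 : Fin a → Fin n) (c2 : Fin b → Fin n) : Multiset ℕ :=
  ((List.ofFn fun r => ((c1 r : ℕ))) ++ List.ofFn fun s => ((c2 s : ℕ)) : List ℕ)

/-- The ')' at position `t` of `w` is unpaired under the usual matching rule. -/
def UnpairedRightAt (w : List Bool) (t : ℕ) : Prop :=
  t < w.length ∧ w.getD t true = false ∧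
    (w.take t).count true ≤ (w.take t).count false

/-- The '(' at position `t` of `w` is unpaired under the usual matching rule. -/
def UnpairedLeftAt (w : List Bool) (t : ℕ) : Prop :=
  t < w.length ∧ w.getD t false = true ∧
    (w.drop (t + 1)).count false ≤ (w.drop (t + 1)).count true

instance : ∀ w t, Decidable (UnpairedRightAt w t) := fun w t => by
  unfold UnpairedRightAt; infer_instance

instance : ∀ w t, Decidable (UnpairedLeftAt w t) := fun w t => by
  unfold UnpairedLeftAt; infer_instance

def numUR (w : List Bool) : ℕ :=
  ((Finset.range w.length).filter fun t => UnpairedRightAt w t).card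

def numUL (w : List Bool) : ℕ :=
  ((Finset.range w.length).filter fun t => UnpairedLeftAt w t).card

/-- Number of unpaired left parentheses strictly to the left of `t`. -/
def cULbefore (w : List Bool) (t : ℕ) : ℕ :=
  ((Finset.range w.length).filter fun s => s < t ∧ UnpairedLeftAt w s).card

/-- Number of unpaired right parentheses strictly to the right of `t`. -/
def cURafter (w : List Bool) (t : ℕ) : ℕ :=
  ((Finset.range w.length).filter fun s => t < s ∧ UnpairedRightAt w s).card

/-- The words `w` and `w'` differ at position `t`. -/
def Differs (w w' : List Bool) (t : ℕ) : Prop := w.getD t false ≠ w'.getD t false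

/-- `(c1', c2')` is the image of `(c1, c2)` under the Lascoux–Schützenberger /
Remmel–Shimozono parenthesation involution: the sorted word of entries is
preserved, and the parenthesis word is modified as follows.  With `r` (resp.
`l`) the number of unpaired right (resp. left) parentheses of the word of
`(c1, c2)`: if `r = 0` nothing changes; if `0 < r ≤ l` the `l - r + 1`
leftmost unpaired left parentheses are changed to right parentheses; if
`r > l` the `r - l - 1` rightmost unpaired right parentheses are changed to
left parentheses. -/
def IsPsiPair {n a1 b1 a2 b2 : ℕ} (c1 : Fin a1 → Fin n) (c2 : Fin b1 → Fin n)
    (c1' : Fin a2 → Fin n) (c2' : Fin b2 → Fin n) : Prop :=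
  pairVals c1 c2 = pairVals c1' c2' ∧
  (numUR (pairWord c1 c2) = 0 →
    ∀ t, ¬ Differs (pairWord c1 c2) (pairWord c1' c2') t) ∧
  (0 < numUR (pairWord c1 c2) → numUR (pairWord c1 c2) ≤ numUL (pairWord c1 c2) →
    ∀ t, Differs (pairWord c1 c2) (pairWord c1' c2') t ↔
      (UnpairedLeftAt (pairWord c1 c2) t ∧
        cULbefore (pairWord c1 c2) t <
          numUL (pairWord c1 c2) - numUR (pairWord c1 c2) + 1)) ∧
  (numUL (pairWord c1 c2) < numUR (pairWord c1 c2) →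
    ∀ t, Differs (pairWord c1 c2) (pairWord c1' c2') t ↔
      (UnpairedRightAt (pairWord c1 c2) t ∧
        cURafter (pairWord c1 c2) t <
          numUR (pairWord c1 c2) - numUL (pairWord c1 c2) - 1))

/-! In the merged word of two strictly increasing columns `c1, c2`, the `)` coming from the
entry `c2 s` (0-indexed row `s`) is preceded by exactly `s` right parentheses, one for each
smaller entry of `c2`, and by one left parenthesis for each entry of `c1` that is `≤ c2 s`
(ties put the left column first). Since `c1` is increasing, this `)` is paired iff `c1` has
more than `s` entries `≤ c2 s`, i.e. iff `c1` has a row `s` and `c1 s ≤ c2 s`. Hence the word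
has no unpaired `)` exactly when `c2` is no longer than `c1` and is weakly larger row by row,
which for all adjacent pairs of columns is the definition of a column-strict tableau. -/

open Finset

theorem List.take_eq_filter_of_pairwise {α : Type*} {r : α → α → Prop} [Std.Asymm r]
    [DecidableRel r] {L : List α} (hL : L.Pairwise r) {t : ℕ} (ht : t < L.length) :
    L.take t = L.filter (r · L[t]) := by
  rw [List.pairwise_iff_getElem] at hL
  generalize hp : L[t] = p
  conv_rhs => rw [← L.take_append_drop t]
  rw [List.filter_append, List.filter_eq_self.2, List.filter_eq_nil_iff.2, List.append_nil]
  · intro x hx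
    obtain ⟨i, hi, rfl⟩ := List.mem_drop_iff_getElem.1 hx
    rcases Nat.eq_zero_or_pos i with rfl | hi0
    · simpa [hp] using irrefl p
    · simpa [hp] using asymm (hL t (t + i) ht (by omega) (by omega))
  · intro x hx
    obtain ⟨i, hi, rfl⟩ := List.mem_take_iff_getElem.1 hx
    simpa [← hp] using hL i t _ ht (by omega)

theorem List.countP_ofFn {α : Type*} {m : ℕ} (g : Fin m → α) (P : α → Bool) :
    (List.ofFn g).countP P = #{i | P (g i)} := by
  rw [List.ofFn_eq_map, List.countP_map, ← List.toFinset_finRange,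
    (List.nodup_finRange m).card_eq_countP]
  simp [Function.comp_def]

theorem Fin.lt_card_filter_le_iff {α : Type*} [Preorder α] [DecidableLE α] {a : ℕ}
    {f : Fin a → α} (hf : Monotone f) (v : α) (s : ℕ) :
    s < #{r | f r ≤ v} ↔ ∃ h : s < a, f ⟨s, h⟩ ≤ v := by
  constructor
  · intro hs
    by_contra! hno
    have hsub : ({r | f r ≤ v} : Finset (Fin a)) ⊆ ({r | (r : ℕ) < s} : Finset (Fin a)) := by
      intro r hr
      simp only [Finset.mem_filter, Finset.mem_univ, true_and] at hr ⊢
      by_contra! hsr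
      exact hno (by omega) ((hf (Fin.le_def.2 hsr)).trans hr)
    have := Finset.card_le_card hsub
    rw [Fin.card_filter_val_lt] at this
    omega
  · rintro ⟨h, hle⟩
    have hsub : Finset.Iic (⟨s, h⟩ : Fin a) ⊆ ({r | f r ≤ v} : Finset (Fin a)) :=
      fun r hr => by simpa using (hf (Finset.mem_Iic.1 hr)).trans hle
    simpa using (Finset.card_le_card hsub)

theorem Fin.antitone_of_forall_val_eq_add_one {β : Type*} [Preorder β] {ℓ : ℕ}
    {f : Fin ℓ → β} (hf : ∀ j j' : Fin ℓ, (j' : ℕ) = j + 1 → f j' ≤ f j) :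
    Antitone f := by
  cases ℓ with
  | zero => exact fun j => j.elim0
  | succ ℓ => exact Fin.antitone_iff_succ_le.2 fun j => hf _ _ (by simp)

instance : Std.Total sortKey := ⟨fun p q => by unfold sortKey; omega⟩

instance : IsTrans (ℕ × ℕ) sortKey := ⟨fun p q r => by unfold sortKey; omega⟩

section TwoColumns

variable {n a b : ℕ} {c1 : Fin a → Fin n} {c2 : Fin b → Fin n}

theorem pairList_perm (c1 : Fin a → Fin n) (c2 : Fin b → Fin n) :
    (pairList c1 c2).Perm
      ((List.ofFn fun r => ((c1 r : ℕ), 0)) ++ List.ofFn fun s => ((c2 s : ℕ), 1)) :=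
  List.perm_insertionSort _ _

theorem mem_pairList {p : ℕ × ℕ} :
    p ∈ pairList c1 c2 ↔ (∃ r, ((c1 r : ℕ), 0) = p) ∨ ∃ s, ((c2 s : ℕ), 1) = p := by
  simp [(pairList_perm c1 c2).mem_iff]

theorem pairList_pairwise_lt (h1 : Function.Injective c1) (h2 : Function.Injective c2) :
    (pairList c1 c2).Pairwise (toLex · < toLex ·) := by
  have hnodup : (pairList c1 c2).Nodup := by
    rw [(pairList_perm c1 c2).nodup_iff, List.nodup_append']
    refine ⟨List.nodup_ofFn.2 fun r r' h => ?_, List.nodup_ofFn.2 fun s s' h => ?_, ?_⟩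
    · simpa [Fin.val_inj, h1.eq_iff] using h
    · simpa [Fin.val_inj, h2.eq_iff] using h
    · simp [List.disjoint_left]
  exact ((List.pairwise_insertionSort _ _).and hnodup).imp fun ⟨hle, hne⟩ =>
    lt_of_le_of_ne (Prod.Lex.toLex_le_toLex.2 hle) (toLex.injective.ne hne)

theorem count_take_pairWord (h1 : Function.Injective c1) (h2 : Function.Injective c2)
    {t : ℕ} (ht : t < (pairList c1 c2).length) :
    ((pairWord c1 c2).take t).count true =
        #{r | toLex ((c1 r : ℕ), 0) < toLex (pairList c1 c2)[t]} ∧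
      ((pairWord c1 c2).take t).count false =
        #{s | toLex ((c2 s : ℕ), 1) < toLex (pairList c1 c2)[t]} := by
  rw [pairWord, ← List.map_take, List.take_eq_filter_of_pairwise (pairList_pairwise_lt h1 h2) ht]
  simp only [List.count_eq_countP, List.countP_map, List.countP_filter,
    (pairList_perm c1 c2).countP_eq, List.countP_append, List.countP_ofFn]
  simp

theorem count_take_pairWord_of_getElem_eq (h1 : StrictMono c1) (h2 : StrictMono c2) {t : ℕ}
    (ht : t < (pairList c1 c2).length) {s : Fin b}
    (hs : (pairList c1 c2)[t] = ((c2 s : ℕ), 1)) :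
    ((pairWord c1 c2).take t).count true = #{r | c1 r ≤ c2 s} ∧
      ((pairWord c1 c2).take t).count false = s := by
  obtain ⟨htrue, hfalse⟩ := count_take_pairWord h1.injective h2.injective ht
  rw [htrue, hfalse, hs]
  simp only [Prod.Lex.toLex_lt_toLex, Fin.val_fin_lt, h2.lt_iff_lt]
  constructor
  · congr 1
    refine Finset.filter_congr fun r _ => ?_
    simp only [Nat.zero_lt_one, and_true, Fin.val_inj, le_iff_lt_or_eq]
  · simp only [lt_irrefl, and_false, or_false]
    rw [Finset.filter_gt_eq_Iio, Fin.card_Iio]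

theorem getD_pairWord {t : ℕ} (ht : t < (pairList c1 c2).length) (d : Bool) :
    (pairWord c1 c2).getD t d = ((pairList c1 c2)[t].2 == 0) := by
  simp [pairWord, List.getElem?_eq_getElem ht]

theorem forall_not_unpairedRightAt_pairWord_iff (h1 : StrictMono c1) (h2 : StrictMono c2) :
    (∀ t, ¬ UnpairedRightAt (pairWord c1 c2) t) ↔
      ∀ s : Fin b, ∃ h : (s : ℕ) < a, c1 ⟨s, h⟩ ≤ c2 s := by
  have hlen : (pairWord c1 c2).length = (pairList c1 c2).length := List.length_map _
  constructor
  · intro hpaired s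
    by_contra! hunfit
    obtain ⟨t, ht, hs⟩ := List.getElem_of_mem (mem_pairList.2 (Or.inr ⟨s, rfl⟩))
    obtain ⟨htrue, hfalse⟩ := count_take_pairWord_of_getElem_eq h1 h2 ht hs
    refine hpaired t ⟨hlen ▸ ht, by rw [getD_pairWord ht, hs]; rfl, ?_⟩
    rw [htrue, hfalse, ← not_lt, Fin.lt_card_filter_le_iff h1.monotone]
    exact fun ⟨h, hle⟩ => (hunfit h).not_ge hle
  · rintro hfit t ⟨htw, hright, hcount⟩
    have ht : t < (pairList c1 c2).length := hlen ▸ htw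
    obtain ⟨r, hr⟩ | ⟨s, hs⟩ := mem_pairList.1 (List.getElem_mem ht)
    · rw [getD_pairWord ht, ← hr] at hright
      exact Bool.noConfusion hright
    · obtain ⟨htrue, hfalse⟩ := count_take_pairWord_of_getElem_eq h1 h2 ht hs.symm
      rw [htrue, hfalse, ← not_lt, Fin.lt_card_filter_le_iff h1.monotone] at hcount
      exact hcount (hfit s)

end TwoColumns

theorem stmt11 (n ℓ : ℕ) (α : Fin ℓ → ℕ) (T : ∀ j, Fin (α j) → Fin n)
    (hT : ∀ j, StrictMono (T j)) :
    (Antitone α ∧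
      ∀ j j' : Fin ℓ, (j' : ℕ) = (j : ℕ) + 1 →
        ∀ (i : Fin (α j)) (i' : Fin (α j')), (i : ℕ) = (i' : ℕ) → T j i ≤ T j' i') ↔
    (∀ j j' : Fin ℓ, (j' : ℕ) = (j : ℕ) + 1 →
      ∀ t, ¬ UnpairedRightAt (pairWord (T j) (T j')) t) := by
  have hpair : ∀ j j' : Fin ℓ, (∀ t, ¬ UnpairedRightAt (pairWord (T j) (T j')) t) ↔
      ∀ i' : Fin (α j'), ∃ h : (i' : ℕ) < α j, T j ⟨i', h⟩ ≤ T j' i' := fun j j' =>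
    forall_not_unpairedRightAt_pairWord_iff (hT j) (hT j')
  simp only [hpair]
  constructor
  · rintro ⟨hα, hrows⟩ j j' hjj' i'
    have hi' : (i' : ℕ) < α j := i'.2.trans_le (hα (Fin.le_def.2 (by omega)))
    exact ⟨hi', hrows j j' hjj' _ i' rfl⟩
  · intro hfit
    refine ⟨Fin.antitone_of_forall_val_eq_add_one fun j j' hjj' => ?_, ?_⟩
    · by_contra! hlt
      obtain ⟨h, -⟩ := hfit j j' hjj' ⟨α j, hlt⟩
      exact h.false
    · rintro j j' hjj' ⟨i, hi⟩ i' rfl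
      exact (hfit j j' hjj' i').2
end
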